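/- Fix 0 < a < 1. The set of pre-images of 1 under the inverse branches of the cusp map, D = { g_{ω_n}ᵃ ∘ ⋯ ∘ g_{ω_1}ᵃ(1) : n ≥ 1, ω₁,…,ω_n ∈ {0,1} }, is dense in [0,1]: for every y₀ ∈ [0,1] and every ε > 0 there exist n and a word (ω₁,…,ω_n) ∈ {0,1}ⁿ such that g_{ω_n}ᵃ ∘ ⋯ ∘ g_{ω_1}ᵃ(1) ∈ (y₀ − ε, y₀ + ε). -/
import Mathlib


open Set MeasureTheory

/-- Left branch of the anti-symmetric cusp map:
`f₀ᵃ(x) = ((a+1)/(2a))·(1 - √(1 - 8ax/(a+1)²))` on `[0,1/2]`. -/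
noncomputable def f0a (a x : ℝ) : ℝ :=
  ((a + 1) / (2 * a)) * (1 - Real.sqrt (1 - 8 * a * x / (a + 1) ^ 2))

/-- Right branch of the anti-symmetric cusp map: `f₁ᵃ(x) = 1 - f₀ᵃ(1-x)` on `[1/2,1]`. -/
noncomputable def f1a (a x : ℝ) : ℝ := 1 - f0a a (1 - x)

/-- Inverse of the left branch: `g₀ᵃ(x) = ((1+a)/2)x - (a/2)x²`. -/
noncomputable def g0a (a x : ℝ) : ℝ := ((1 + a) / 2) * x - (a / 2) * x ^ 2

/-- Inverse of the right branch: `g₁ᵃ(x) = 1/2 + ((1-a)/2)x + (a/2)x²`. -/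
noncomputable def g1a (a x : ℝ) : ℝ := 1 / 2 + ((1 - a) / 2) * x + (a / 2) * x ^ 2

/-- Applies the inverse branches `g₀ᵃ` (for `false`) and `g₁ᵃ` (for `true`)
successively to `1`, following the word `w = (ω₁, …, ω_n)` (so `ω₁` acts first):
the result is `g_{ω_n}ᵃ ∘ ⋯ ∘ g_{ω_1}ᵃ(1)`. -/
noncomputable def branchWord (a : ℝ) (w : List Bool) : ℝ :=
  w.foldl (fun y b => if b then g1a a y else g0a a y) 1

lemma step_mem {a : ℝ} (ha : 0 < a) (ha1 : a < 1) {x : ℝ} (hx : x ∈ Icc (0:ℝ) 1)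
    (b : Bool) : (if b then g1a a x else g0a a x) ∈ Icc (0:ℝ) 1 := by
  obtain ⟨h0, h1⟩ := hx
  have hax : (0:ℝ) ≤ 1 - a * x := by nlinarith
  have h1x : (0:ℝ) ≤ 1 - x := by linarith
  cases b <;>
    simp only [g0a, g1a, Bool.false_eq_true, if_true, if_false] <;> constructor
  · nlinarith [mul_nonneg h0 (by nlinarith : (0:ℝ) ≤ 1 + a - a * x)]
  · nlinarith [mul_nonneg h1x hax]
  · nlinarith [mul_nonneg h0 h0, mul_nonneg h0 (le_of_lt ha)]
  · nlinarith [mul_nonneg h1x (by nlinarith : (0:ℝ) ≤ 1 + a * x)]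

lemma foldl_mem {a : ℝ} (ha : 0 < a) (ha1 : a < 1) (w : List Bool) {x : ℝ}
    (hx : x ∈ Icc (0:ℝ) 1) :
    w.foldl (fun y b => if b then g1a a y else g0a a y) x ∈ Icc (0:ℝ) 1 := by
  induction w generalizing x with
  | nil => exact hx
  | cons b w ih => exact ih (step_mem ha ha1 hx b)

lemma branchWord_mem {a : ℝ} (ha : 0 < a) (ha1 : a < 1) (w : List Bool) :
    branchWord a w ∈ Icc (0:ℝ) 1 :=
  foldl_mem ha ha1 w (by constructor <;> norm_num)

lemma g0_lip {a : ℝ} (ha : 0 < a) (ha1 : a < 1) {x z : ℝ} (hx : x ∈ Icc (0:ℝ) 1)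
    (hz : z ∈ Icc (0:ℝ) 1) : |g0a a x - g0a a z| ≤ |x - z| * ((1 + a) / 2) := by
  obtain ⟨hx0, hx1⟩ := hx; obtain ⟨hz0, hz1⟩ := hz
  have h : g0a a x - g0a a z = (x - z) * ((1 + a) / 2 - a * (x + z) / 2) := by
    unfold g0a; ring
  rw [h, abs_mul]
  gcongr
  rw [abs_le]
  constructor <;> nlinarith

lemma g1_lip {a : ℝ} (ha : 0 < a) (ha1 : a < 1) {x z : ℝ} (hx : x ∈ Icc (0:ℝ) 1)
    (hz : z ∈ Icc (0:ℝ) 1) : |g1a a x - g1a a z| ≤ |x - z| * ((1 + a) / 2) := by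
  obtain ⟨hx0, hx1⟩ := hx; obtain ⟨hz0, hz1⟩ := hz
  have h : g1a a x - g1a a z = (x - z) * ((1 - a) / 2 + a * (x + z) / 2) := by
    unfold g1a; ring
  rw [h, abs_mul]
  gcongr
  rw [abs_le]
  constructor <;> nlinarith

lemma key {a : ℝ} (ha : 0 < a) (ha1 : a < 1) :
    ∀ n : ℕ, ∀ y ∈ Icc (0:ℝ) 1, ∃ w : List Bool, w.length = n ∧
      |branchWord a w - y| ≤ ((1 + a) / 2) ^ n := by
  intro n
  induction n with
  | zero =>
    intro y hy
    refine ⟨[], rfl, ?_⟩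
    obtain ⟨h0, h1⟩ := hy
    simp only [branchWord, List.foldl_nil, pow_zero]
    rw [abs_le]; constructor <;> linarith
  | succ n ih =>
    intro y hy
    obtain ⟨hy0, hy1⟩ := hy
    have hcont0 : ContinuousOn (g0a a) (Icc (0:ℝ) 1) := by
      unfold g0a; fun_prop
    have hcont1 : ContinuousOn (g1a a) (Icc (0:ℝ) 1) := by
      unfold g1a; fun_prop
    by_cases hc : y ≤ 1 / 2
    · have h01 : (0:ℝ) ≤ 1 := by norm_num
      have himg := intermediate_value_Icc h01 hcont0
      have hy' : y ∈ Icc (g0a a 0) (g0a a 1) := by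
        have e0 : g0a a 0 = 0 := by unfold g0a; ring
        have e1 : g0a a 1 = 1 / 2 := by unfold g0a; ring
        rw [e0, e1]; exact ⟨hy0, hc⟩
      obtain ⟨z, hzmem, hgz⟩ := himg hy'
      obtain ⟨w, hwl, hw⟩ := ih z hzmem
      refine ⟨w ++ [false], by simp [hwl], ?_⟩
      have hbw : branchWord a (w ++ [false]) = g0a a (branchWord a w) := by
        simp [branchWord, List.foldl_append]
      rw [hbw, ← hgz]
      calc |g0a a (branchWord a w) - g0a a z|
          ≤ |branchWord a w - z| * ((1 + a) / 2) :=
            g0_lip ha ha1 (branchWord_mem ha ha1 w) hzmem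
        _ ≤ ((1 + a) / 2) ^ n * ((1 + a) / 2) := by gcongr
        _ = ((1 + a) / 2) ^ (n + 1) := by rw [pow_succ]
    · have h01 : (0:ℝ) ≤ 1 := by norm_num
      have himg := intermediate_value_Icc h01 hcont1
      have hy' : y ∈ Icc (g1a a 0) (g1a a 1) := by
        have e0 : g1a a 0 = 1 / 2 := by unfold g1a; ring
        have e1 : g1a a 1 = 1 := by unfold g1a; ring
        rw [e0, e1]; exact ⟨by linarith, hy1⟩
      obtain ⟨z, hzmem, hgz⟩ := himg hy'
      obtain ⟨w, hwl, hw⟩ := ih z hzmem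
      refine ⟨w ++ [true], by simp [hwl], ?_⟩
      have hbw : branchWord a (w ++ [true]) = g1a a (branchWord a w) := by
        simp [branchWord, List.foldl_append]
      rw [hbw, ← hgz]
      calc |g1a a (branchWord a w) - g1a a z|
          ≤ |branchWord a w - z| * ((1 + a) / 2) :=
            g1_lip ha ha1 (branchWord_mem ha ha1 w) hzmem
        _ ≤ ((1 + a) / 2) ^ n * ((1 + a) / 2) := by gcongr
        _ = ((1 + a) / 2) ^ (n + 1) := by rw [pow_succ]

/-- For `0 < a < 1`, the set of pre-images of `1` under the
inverse branches of the cusp map is dense in `[0,1]`. -/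
theorem preimages_of_one_dense (a : ℝ) (ha : 0 < a) (ha1 : a < 1) :
    ∀ y₀ ∈ Icc (0:ℝ) 1, ∀ ε : ℝ, 0 < ε →
      ∃ w : List Bool, w ≠ [] ∧ branchWord a w ∈ Ioo (y₀ - ε) (y₀ + ε) := by
  intro y₀ hy₀ ε hε
  set lam : ℝ := (1 + a) / 2 with hlam
  have hlam0 : 0 ≤ lam := by rw [hlam]; linarith
  have hlam1 : lam < 1 := by rw [hlam]; linarith
  obtain ⟨N, hN⟩ := exists_pow_lt_of_lt_one hε hlam1
  obtain ⟨w, hwl, hw⟩ := key ha ha1 (N + 1) y₀ hy₀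
  have hne : w ≠ [] := by
    intro h; rw [h] at hwl; simp at hwl
  have hpow : lam ^ (N + 1) ≤ lam ^ N :=
    pow_le_pow_of_le_one hlam0 (le_of_lt hlam1) (Nat.le_succ N)
  have hlt : |branchWord a w - y₀| < ε := lt_of_le_of_lt (hw.trans hpow) hN
  rw [abs_lt] at hlt
  exact ⟨w, hne, by constructor <;> linarith [hlt.1, hlt.2]⟩
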